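/- arXiv:math/0601603 — 2 statements merged into one kernel-verified Lean document; each statement's English description precedes it below -/
import Mathlib

section
/- Let δ : D → E be a monomorphism which is a coalgebra homomorphism in a coabelian monoidal category M. Then, for all m, n ∈ ℕ, the wedge of the iterated wedge powers satisfies (D^{∧_E^m} ∧_E D^{∧_E^n}, i_{D^{∧_E^m} ∧_E D^{∧_E^n}}^E) = (D^{∧_E^{m+n}}, δ_{m+n}) as subobjects of E. -/
set_option linter.unusedSectionVars false
set_option maxHeartbeats 1000000

open CategoryTheory CategoryTheory.Limits MonoidalCategory ZeroObject

universe v u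

variable {M : Type u} [Category.{v} M] [MonoidalCategory M] [Abelian M]

/-- The `n`-th tensor power `X^{⊗n}` of an object, with `X^{⊗0} = 𝟙`, `X^{⊗1} = X` and
`X^{⊗(n+1)} = X^{⊗n} ⊗ X` for `n ≥ 1`. -/
def tpow (X : M) : ℕ → M
  | 0 => 𝟙_ M
  | 1 => X
  | (n + 2) => tpow X (n + 1) ⊗ X

/-- The `n`-th tensor power `f^{⊗n}` of a morphism. -/
def tpowHom {X Y : M} (f : X ⟶ Y) : (n : ℕ) → (tpow X n ⟶ tpow Y n)
  | 0 => 𝟙 (𝟙_ M)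
  | 1 => f
  | (n + 2) => tpowHom f (n + 1) ⊗ₘ f

/-- The `n`-th iterated comultiplication `Δ_E^n : E ⟶ E^{⊗(n+1)}` of a coalgebra `E`,
with `Δ_E^0 = 𝟙 E`, `Δ_E^1 = Δ_E` and `Δ_E^n = (Δ_E^{n-1} ⊗ E) ∘ Δ_E` for `n > 1`. -/
noncomputable def iterComul (E : Comon M) : (n : ℕ) → (E.X ⟶ tpow E.X (n + 1))
  | 0 => 𝟙 E.X
  | (n + 1) => ComonObj.comul (X := E.X) ≫ (iterComul E n ⊗ₘ 𝟙 E.X)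

variable {D E : Comon M} (δ : D ⟶ E)

/-- The `n`-th iterated wedge power `D^{∧_E^n} := ker (p^{⊗n} ∘ Δ_E^{n-1})` of a subcoalgebra
`δ : D ↪ E`, where `p : E ⟶ E/D` is the cokernel of `δ`; by convention `D^{∧_E^0} = 0`. -/
noncomputable def wedgePow : ℕ → M
  | 0 => 0
  | (n + 1) => kernel (iterComul E n ≫ tpowHom (cokernel.π δ.hom) (n + 1))

/-- The canonical monomorphism `δ_n : D^{∧_E^n} ⟶ E`; by convention `δ_0 = 0`. -/
noncomputable def wedgePowι : (n : ℕ) → (wedgePow δ n ⟶ E.X)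
  | 0 => 0
  | (n + 1) => kernel.ι (iterComul E n ≫ tpowHom (cokernel.π δ.hom) (n + 1))

theorem tensorLeft_map (X : M) {Y Z : M} (f : Y ⟶ Z) : (tensorLeft X).map f = X ◁ f := rfl

theorem tensorRight_map (X : M) {Y Z : M} (f : Y ⟶ Z) : (tensorRight X).map f = f ▷ X := rfl

theorem tensor_comp {X₁ Y₁ Z₁ X₂ Y₂ Z₂ : M} (f₁ : X₁ ⟶ Y₁) (f₂ : X₂ ⟶ Y₂) (g₁ : Y₁ ⟶ Z₁)
    (g₂ : Y₂ ⟶ Z₂) : (f₁ ≫ g₁) ⊗ₘ (f₂ ≫ g₂) = (f₁ ⊗ₘ f₂) ≫ (g₁ ⊗ₘ g₂) :=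
  (tensorHom_comp_tensorHom f₁ f₂ g₁ g₂).symm

theorem tensor_comp_assoc {X₁ Y₁ Z₁ X₂ Y₂ Z₂ W : M} (f₁ : X₁ ⟶ Y₁) (f₂ : X₂ ⟶ Y₂) (g₁ : Y₁ ⟶ Z₁)
    (g₂ : Y₂ ⟶ Z₂) (h : Z₁ ⊗ Z₂ ⟶ W) :
    ((f₁ ≫ g₁) ⊗ₘ (f₂ ≫ g₂)) ≫ h = (f₁ ⊗ₘ f₂) ≫ (g₁ ⊗ₘ g₂) ≫ h := by
  rw [tensor_comp, Category.assoc]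

/-! ### Auxiliary lemmas -/

section Helpers

variable {A B B' W T : M}

theorem aux_whiskerLeft_zero [∀ X : M, (tensorLeft X).Additive] (X : M) {Y Z : M} :
    X ◁ (0 : Y ⟶ Z) = 0 := by
  rw [← tensorLeft_map]
  exact (tensorLeft X).map_zero Y Z

theorem aux_zero_whiskerRight [∀ X : M, (tensorRight X).Additive] (X : M) {Y Z : M} :
    (0 : Y ⟶ Z) ▷ X = 0 := by
  rw [← tensorRight_map]
  exact (tensorRight X).map_zero Y Z

theorem aux_tensor_zero [∀ X : M, (tensorLeft X).Additive]
    {X Y X' Y' : M} (f : X ⟶ Y) : f ⊗ₘ (0 : X' ⟶ Y') = 0 := by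
  rw [MonoidalCategory.tensorHom_def, aux_whiskerLeft_zero, comp_zero]

theorem aux_zero_tensor [∀ X : M, (tensorRight X).Additive]
    {X Y X' Y' : M} (f : X' ⟶ Y') : (0 : X ⟶ Y) ⊗ₘ f = 0 := by
  rw [MonoidalCategory.tensorHom_def, aux_zero_whiskerRight, zero_comp]

/-- If a map `g` into `A ⊗ W` is killed by `u ▷ W` then it is killed by `v ▷ W` whenever
`ker u` is killed by `v`.  (Uses that `- ⊗ W` preserves kernels.) -/
theorem whiskerRight_killed [∀ X : M, (tensorRight X).Additive]
    [∀ X : M, PreservesFiniteLimits (tensorRight X)]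
    (u : A ⟶ B) (v : A ⟶ B') (h1 : kernel.ι u ≫ v = 0) (g : T ⟶ A ⊗ W)
    (hg : g ≫ (u ▷ W) = 0) : g ≫ (v ▷ W) = 0 := by
  have hg' : g ≫ (tensorRight W).map u = 0 := by simpa using hg
  have hfac : g = kernel.lift _ g hg' ≫ kernel.ι ((tensorRight W).map u) :=
    (kernel.lift_ι _ _ _).symm
  have hι : kernel.ι ((tensorRight W).map u) =
      inv (kernelComparison u (tensorRight W)) ≫ (tensorRight W).map (kernel.ι u) := by
    rw [IsIso.eq_inv_comp, kernelComparison_comp_ι]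
  rw [hfac, hι]
  simp only [tensorRight_map, Category.assoc]
  rw [← comp_whiskerRight, h1, aux_zero_whiskerRight, comp_zero, comp_zero]

theorem whiskerLeft_killed [∀ X : M, (tensorLeft X).Additive]
    [∀ X : M, PreservesFiniteLimits (tensorLeft X)]
    (u : A ⟶ B) (v : A ⟶ B') (h1 : kernel.ι u ≫ v = 0) (g : T ⟶ W ⊗ A)
    (hg : g ≫ (W ◁ u) = 0) : g ≫ (W ◁ v) = 0 := by
  have hg' : g ≫ (tensorLeft W).map u = 0 := by simpa using hg
  have hfac : g = kernel.lift _ g hg' ≫ kernel.ι ((tensorLeft W).map u) :=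
    (kernel.lift_ι _ _ _).symm
  have hι : kernel.ι ((tensorLeft W).map u) =
      inv (kernelComparison u (tensorLeft W)) ≫ (tensorLeft W).map (kernel.ι u) := by
    rw [IsIso.eq_inv_comp, kernelComparison_comp_ι]
  rw [hfac, hι]
  simp only [tensorLeft_map, Category.assoc]
  rw [← MonoidalCategory.whiskerLeft_comp, h1, aux_whiskerLeft_zero, comp_zero, comp_zero]

/-- Replacing both factors of a tensor product of maps by maps with the same kernels does not
change the property of killing a given morphism. -/
theorem tensor_killed_iff [∀ X : M, (tensorLeft X).Additive] [∀ X : M, (tensorRight X).Additive]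
    [∀ X : M, PreservesFiniteLimits (tensorLeft X)]
    [∀ X : M, PreservesFiniteLimits (tensorRight X)]
    {A A' V V' : M} (u : A ⟶ B) (u' : A ⟶ B') (v : A' ⟶ V) (v' : A' ⟶ V')
    (hu1 : kernel.ι u ≫ u' = 0) (hu2 : kernel.ι u' ≫ u = 0)
    (hv1 : kernel.ι v ≫ v' = 0) (hv2 : kernel.ι v' ≫ v = 0)
    (g : T ⟶ A ⊗ A') :
    g ≫ (u ⊗ₘ v) = 0 ↔ g ≫ (u' ⊗ₘ v') = 0 := by
  rw [tensorHom_def' u v, tensorHom_def u' v', ← Category.assoc, ← Category.assoc]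
  constructor
  · intro h
    have h2 : (g ≫ (A ◁ v)) ≫ (u' ▷ V) = 0 := whiskerRight_killed u u' hu1 _ h
    rw [Category.assoc, whisker_exchange, ← Category.assoc] at h2
    exact whiskerLeft_killed v v' hv1 _ h2
  · intro h
    have h2 : (g ≫ (u' ▷ A')) ≫ (B' ◁ v) = 0 := whiskerLeft_killed v' v hv2 _ h
    rw [Category.assoc, ← whisker_exchange, ← Category.assoc] at h2
    exact whiskerRight_killed u' u hu2 _ h2

/-- In an abelian category, the kernel of the cokernel of `kernel.ι f` is killed by `f`. -/
theorem kernel_cokernel_killed {X Y : M} (f : X ⟶ Y) :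
    kernel.ι (cokernel.π (kernel.ι f)) ≫ f = 0 := by
  have h := Abelian.monoIsKernelOfCokernel _ (cokernelIsCokernel (kernel.ι f))
  obtain ⟨j, hj⟩ := KernelFork.IsLimit.lift' h (kernel.ι (cokernel.π (kernel.ι f)))
      (kernel.condition _)
  have hj' : kernel.ι (cokernel.π (kernel.ι f)) = j ≫ kernel.ι f := by
    simpa using hj.symm
  rw [hj', Category.assoc, kernel.condition, comp_zero]

/-- Two morphisms out of the same object killing exactly the same maps have canonically
isomorphic kernels. -/
theorem kernelIsoOfIff {A V V' : M} {u : A ⟶ V} {v : A ⟶ V'}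
    (H : ∀ {T : M} (h : T ⟶ A), h ≫ u = 0 ↔ h ≫ v = 0) :
    ∃ φ : kernel u ≅ kernel v, φ.hom ≫ kernel.ι v = kernel.ι u := by
  refine ⟨⟨kernel.lift v (kernel.ι u) ((H _).mp (kernel.condition u)),
      kernel.lift u (kernel.ι v) ((H _).mpr (kernel.condition v)), ?_, ?_⟩, by simp⟩
  · rw [← cancel_mono (kernel.ι u)]
    simp
  · rw [← cancel_mono (kernel.ι v)]
    simp

end Helpers

section Coalg

/-- The defining map of the `(b+1)`-st wedge power. -/
noncomputable def Ue (δ : D ⟶ E) (b : ℕ) : E.X ⟶ tpow (cokernel δ.hom) (b + 1) :=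
  iterComul E b ≫ tpowHom (cokernel.π δ.hom) (b + 1)

theorem Ue_zero : Ue δ 0 = cokernel.π δ.hom := Category.id_comp _

theorem Ue_succ (b : ℕ) : Ue δ (b + 1) = ComonObj.comul (X := E.X) ≫ (Ue δ b ⊗ₘ cokernel.π δ.hom) := by
  show (ComonObj.comul (X := E.X) ≫ (iterComul E b ⊗ₘ 𝟙 E.X)) ≫
      (tpowHom (cokernel.π δ.hom) (b + 1) ⊗ₘ cokernel.π δ.hom) = _
  rw [Category.assoc, ← tensor_comp, Category.id_comp]
  rfl

theorem wedgePow_succ (k : ℕ) : wedgePow δ (k + 1) = kernel (Ue δ k) := rfl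

theorem wedgePowι_succ (k : ℕ) : wedgePowι δ (k + 1) = kernel.ι (Ue δ k) := rfl

/-- `E/D` is a left quotient `E`-comodule: `Δ ≫ (E ◁ p)` factors through `p`. -/
noncomputable def wLmap [∀ X : M, (tensorLeft X).Additive] : cokernel δ.hom ⟶ E.X ⊗ cokernel δ.hom :=
  cokernel.desc δ.hom (ComonObj.comul (X := E.X) ≫ (E.X ◁ cokernel.π δ.hom)) (by
    rw [← Category.assoc, IsComonHom.hom_comul δ.hom, Category.assoc, ← id_tensorHom, ← tensor_comp,
      cokernel.condition, Category.comp_id, aux_tensor_zero, comp_zero])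

theorem wL_fac [∀ X : M, (tensorLeft X).Additive] :
    cokernel.π δ.hom ≫ wLmap δ = ComonObj.comul (X := E.X) ≫ (E.X ◁ cokernel.π δ.hom) :=
  cokernel.π_desc _ _ _

/-- `E/D` is a right quotient `E`-comodule: `Δ ≫ (p ▷ E)` factors through `p`. -/
noncomputable def wRmap [∀ X : M, (tensorLeft X).Additive] [∀ X : M, (tensorRight X).Additive] :
    cokernel δ.hom ⟶ cokernel δ.hom ⊗ E.X :=
  cokernel.desc δ.hom (ComonObj.comul (X := E.X) ≫ (cokernel.π δ.hom ▷ E.X)) (by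
    rw [← Category.assoc, IsComonHom.hom_comul δ.hom, Category.assoc, ← tensorHom_id, ← tensor_comp,
      cokernel.condition, Category.comp_id, aux_zero_tensor, comp_zero])

theorem wR_fac [∀ X : M, (tensorLeft X).Additive] [∀ X : M, (tensorRight X).Additive] :
    cokernel.π δ.hom ≫ wRmap δ = ComonObj.comul (X := E.X) ≫ (cokernel.π δ.hom ▷ E.X) :=
  cokernel.π_desc _ _ _

/-- `D^{∧ (b+1)}` is a left coideal: `Δ ≫ (E ◁ U_b)` factors through `U_b`. -/
theorem comulL [∀ X : M, (tensorLeft X).Additive] (b : ℕ) :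
    ∃ w, ComonObj.comul (X := E.X) ≫ (E.X ◁ Ue δ b) = Ue δ b ≫ w := by
  induction b with
  | zero =>
    exact ⟨wLmap δ, by rw [Ue_zero]; exact (wL_fac δ).symm⟩
  | succ b ih =>
    obtain ⟨w, hw⟩ := ih
    refine ⟨(w ▷ cokernel δ.hom) ≫ (α_ _ _ _).hom, ?_⟩
    rw [Ue_succ]
    calc ComonObj.comul (X := E.X) ≫ (E.X ◁ (ComonObj.comul (X := E.X) ≫ (Ue δ b ⊗ₘ cokernel.π δ.hom)))
        = ComonObj.comul (X := E.X) ≫ (E.X ◁ ComonObj.comul (X := E.X)) ≫ (E.X ◁ (Ue δ b ⊗ₘ cokernel.π δ.hom)) := by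
          rw [MonoidalCategory.whiskerLeft_comp]
      _ = ComonObj.comul (X := E.X) ≫ (ComonObj.comul (X := E.X) ▷ E.X) ≫ (α_ _ _ _).hom ≫
            (𝟙 E.X ⊗ₘ (Ue δ b ⊗ₘ cokernel.π δ.hom)) := by
          rw [ComonObj.comul_assoc_assoc, id_tensorHom]
      _ = ComonObj.comul (X := E.X) ≫ (ComonObj.comul (X := E.X) ▷ E.X) ≫ ((𝟙 E.X ⊗ₘ Ue δ b) ⊗ₘ cokernel.π δ.hom) ≫
            (α_ _ _ _).hom := by
          rw [associator_naturality]
      _ = ComonObj.comul (X := E.X) ≫ ((ComonObj.comul (X := E.X) ≫ (𝟙 E.X ⊗ₘ Ue δ b)) ⊗ₘ (𝟙 E.X ≫ cokernel.π δ.hom)) ≫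
            (α_ _ _ _).hom := by
          rw [← tensorHom_id, ← tensor_comp_assoc]
      _ = ComonObj.comul (X := E.X) ≫ ((Ue δ b ≫ w) ⊗ₘ (cokernel.π δ.hom ≫ 𝟙 _)) ≫ (α_ _ _ _).hom := by
          rw [id_tensorHom, hw, Category.id_comp, Category.comp_id]
      _ = (ComonObj.comul (X := E.X) ≫ (Ue δ b ⊗ₘ cokernel.π δ.hom)) ≫ (w ▷ cokernel δ.hom) ≫
            (α_ _ _ _).hom := by
          rw [tensor_comp, tensorHom_id, Category.assoc, Category.assoc]

/-- `D^{∧ (b+1)}` is a right coideal: `Δ ≫ (U_b ▷ E)` factors through `U_b`. -/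
theorem comulR [∀ X : M, (tensorLeft X).Additive] [∀ X : M, (tensorRight X).Additive] (b : ℕ) :
    ∃ w, ComonObj.comul (X := E.X) ≫ (Ue δ b ▷ E.X) = Ue δ b ≫ w := by
  cases b with
  | zero =>
    exact ⟨wRmap δ, by rw [Ue_zero]; exact (wR_fac δ).symm⟩
  | succ b =>
    refine ⟨(tpow (cokernel δ.hom) (b + 1) ◁ wRmap δ) ≫ (α_ _ _ _).inv, ?_⟩
    rw [Ue_succ]
    calc ComonObj.comul (X := E.X) ≫ ((ComonObj.comul (X := E.X) ≫ (Ue δ b ⊗ₘ cokernel.π δ.hom)) ▷ E.X)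
        = ComonObj.comul (X := E.X) ≫ (ComonObj.comul (X := E.X) ▷ E.X) ≫ ((Ue δ b ⊗ₘ cokernel.π δ.hom) ▷ E.X) := by
          rw [comp_whiskerRight]
      _ = ComonObj.comul (X := E.X) ≫ (E.X ◁ ComonObj.comul (X := E.X)) ≫ (α_ _ _ _).inv ≫
            ((Ue δ b ⊗ₘ cokernel.π δ.hom) ⊗ₘ 𝟙 E.X) := by
          rw [ComonObj.comul_assoc_flip_assoc, tensorHom_id]
      _ = ComonObj.comul (X := E.X) ≫ (E.X ◁ ComonObj.comul (X := E.X)) ≫ (Ue δ b ⊗ₘ (cokernel.π δ.hom ⊗ₘ 𝟙 E.X)) ≫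
            (α_ _ _ _).inv := by
          rw [associator_inv_naturality]
      _ = ComonObj.comul (X := E.X) ≫ ((𝟙 E.X ≫ Ue δ b) ⊗ₘ (ComonObj.comul (X := E.X) ≫ (cokernel.π δ.hom ⊗ₘ 𝟙 E.X))) ≫
            (α_ _ _ _).inv := by
          rw [← id_tensorHom, ← tensor_comp_assoc]
      _ = ComonObj.comul (X := E.X) ≫ (Ue δ b ⊗ₘ (cokernel.π δ.hom ≫ wRmap δ)) ≫ (α_ _ _ _).inv := by
          rw [Category.id_comp, tensorHom_id, wR_fac]
      _ = (ComonObj.comul (X := E.X) ≫ (Ue δ b ⊗ₘ cokernel.π δ.hom)) ≫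
            (tpow (cokernel δ.hom) (b + 1) ◁ wRmap δ) ≫ (α_ _ _ _).inv := by
          rw [← Category.comp_id (Ue δ b), tensor_comp, id_tensorHom, Category.assoc,
            Category.assoc, Category.comp_id]

/-- The key computation: `Δ ≫ (U_a ⊗ U_b)` agrees with `U_{a+b+1}` up to an isomorphism of
the targets. -/
theorem comulM (a : ℕ) : ∀ b : ℕ,
    ∃ μ : tpow (cokernel δ.hom) (a + b + 1 + 1) ≅
        tpow (cokernel δ.hom) (a + 1) ⊗ tpow (cokernel δ.hom) (b + 1),
      Ue δ (a + b + 1) ≫ μ.hom = ComonObj.comul (X := E.X) ≫ (Ue δ a ⊗ₘ Ue δ b)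
  | 0 => by
    refine ⟨Iso.refl _, ?_⟩
    rw [Iso.refl_hom]; refine (Category.comp_id _).trans ?_; rw [show Ue δ 0 = cokernel.π δ.hom from Ue_zero δ]
    exact Ue_succ δ a
  | (b + 1) => by
    obtain ⟨μ, hμ⟩ := comulM a b
    refine ⟨whiskerRightIso μ (cokernel δ.hom) ≪≫ α_ _ _ _, ?_⟩
    show Ue δ (a + b + 1 + 1) ≫ (μ.hom ▷ cokernel δ.hom) ≫ (α_ _ _ _).hom = _
    calc Ue δ (a + b + 1 + 1) ≫ (μ.hom ▷ cokernel δ.hom) ≫ (α_ _ _ _).hom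
        = (ComonObj.comul (X := E.X) ≫ (Ue δ (a + b + 1) ⊗ₘ cokernel.π δ.hom)) ≫
            (μ.hom ▷ cokernel δ.hom) ≫ (α_ _ _ _).hom := by rw [← Ue_succ]; rfl
      _ = ComonObj.comul (X := E.X) ≫ (((Ue δ (a + b + 1) ≫ μ.hom) ⊗ₘ cokernel.π δ.hom) ≫ (α_ _ _ _).hom) := by
          rw [← tensorHom_id, Category.assoc, ← tensor_comp_assoc, Category.comp_id]
      _ = ComonObj.comul (X := E.X) ≫ ((ComonObj.comul (X := E.X) ≫ (Ue δ a ⊗ₘ Ue δ b)) ⊗ₘ cokernel.π δ.hom) ≫ (α_ _ _ _).hom := by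
          rw [hμ]
      _ = ComonObj.comul (X := E.X) ≫ (ComonObj.comul (X := E.X) ▷ E.X) ≫ (((Ue δ a ⊗ₘ Ue δ b)) ⊗ₘ cokernel.π δ.hom) ≫
            (α_ _ _ _).hom := by
          rw [← tensorHom_id, ← tensor_comp_assoc, Category.id_comp]
      _ = ComonObj.comul (X := E.X) ≫ (ComonObj.comul (X := E.X) ▷ E.X) ≫ (α_ _ _ _).hom ≫
            (Ue δ a ⊗ₘ (Ue δ b ⊗ₘ cokernel.π δ.hom)) := by
          rw [associator_naturality]
      _ = ComonObj.comul (X := E.X) ≫ (E.X ◁ ComonObj.comul (X := E.X)) ≫ (Ue δ a ⊗ₘ (Ue δ b ⊗ₘ cokernel.π δ.hom)) := by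
          rw [ComonObj.comul_assoc_assoc]
      _ = (ComonObj.comul (X := E.X) ≫ (Ue δ a ⊗ₘ Ue δ (b + 1)) :
            E.X ⟶ tpow (cokernel δ.hom) (a + 1) ⊗ (tpow (cokernel δ.hom) (b + 1) ⊗ cokernel δ.hom)) := by
          rw [← id_tensorHom, ← tensor_comp, Category.id_comp, ← Ue_succ]

theorem counit_cancel_left {Z T : M} (u : E.X ⟶ Z) (h : T ⟶ E.X)
    (hh : (h ≫ ComonObj.comul (X := E.X)) ≫ (E.X ◁ u) = 0) : h ≫ u = 0 := by
  have h1 : h ≫ ComonObj.comul (X := E.X) ≫ (E.X ◁ u) ≫ (ComonObj.counit (X := E.X) ▷ Z) = 0 := by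
    have h0 := congrArg (fun z => z ≫ (ComonObj.counit (X := E.X) ▷ Z)) hh
    simpa only [Category.assoc, zero_comp] using h0
  rw [whisker_exchange, ComonObj.counit_comul_assoc, ← leftUnitor_inv_naturality] at h1
  rw [← Category.assoc] at h1
  exact zero_of_comp_mono _ h1

theorem counit_cancel_right {Z T : M} (u : E.X ⟶ Z) (h : T ⟶ E.X)
    (hh : (h ≫ ComonObj.comul (X := E.X)) ≫ (u ▷ E.X) = 0) : h ≫ u = 0 := by
  have h1 : h ≫ ComonObj.comul (X := E.X) ≫ (u ▷ E.X) ≫ (Z ◁ ComonObj.counit (X := E.X)) = 0 := by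
    have h0 := congrArg (fun z => z ≫ (Z ◁ ComonObj.counit (X := E.X))) hh
    simpa only [Category.assoc, zero_comp] using h0
  rw [← whisker_exchange, ComonObj.comul_counit_assoc, ← rightUnitor_inv_naturality] at h1
  rw [← Category.assoc] at h1
  exact zero_of_comp_mono _ h1

end Coalg

theorem isIso_π0 : IsIso (cokernel.π (wedgePowι δ 0)) := by
  have h0 : wedgePowι δ 0 = 0 := rfl
  refine ⟨cokernel.desc _ (𝟙 E.X) (by rw [h0, zero_comp]), cokernel.π_desc _ _ _, ?_⟩
  apply coequalizer.hom_ext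
  simp

/-- Let `δ : D ⟶ E` be a monomorphism of coalgebras in a coabelian monoidal
category `M`.  Then for all `m, n ∈ ℕ` one has
`(D^{∧_E^m} ∧_E D^{∧_E^n}, i) = (D^{∧_E^{m+n}}, δ_{m+n})` as subobjects of `E`, i.e. there is
an isomorphism between the wedge product `D^{∧_E^m} ∧_E D^{∧_E^n} = ker ((p_{D^m} ⊗ p_{D^n}) ∘ Δ_E)`
and `D^{∧_E^{m+n}}` commuting with the canonical monomorphisms into `E`. -/
theorem wedgePow_wedge_wedgePow
    {M : Type u} [Category.{v} M] [MonoidalCategory M] [Abelian M]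
    [∀ X : M, (tensorLeft X).Additive] [∀ X : M, (tensorRight X).Additive]
    [∀ X : M, PreservesFiniteLimits (tensorLeft X)]
    [∀ X : M, PreservesFiniteLimits (tensorRight X)]
    {D E : Comon M} (δ : D ⟶ E) [Mono δ.hom] (m n : ℕ) :
    ∃ φ : kernel (ComonObj.comul (X := E.X) ≫ (cokernel.π (wedgePowι δ m) ⊗ₘ cokernel.π (wedgePowι δ n))) ≅
        wedgePow δ (m + n),
      φ.hom ≫ wedgePowι δ (m + n) =
        kernel.ι (ComonObj.comul (X := E.X) ≫ (cokernel.π (wedgePowι δ m) ⊗ₘ cokernel.π (wedgePowι δ n))) := by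
  obtain _ | a := m
  · obtain _ | b := n
    · -- both trivial: the wedge of `0` with `0` is `0`.
      haveI := isIso_π0 δ
      haveI hI : IsIso (cokernel.π (wedgePowι δ 0) ⊗ₘ cokernel.π (wedgePowι δ 0)) := by
        rw [MonoidalCategory.tensorHom_def]
        infer_instance
      have h2 : kernel.ι (ComonObj.comul (X := E.X) ≫ (cokernel.π (wedgePowι δ 0) ⊗ₘ cokernel.π (wedgePowι δ 0))) ≫
          ComonObj.comul (X := E.X) = 0 := by
        have h1 := kernel.condition
          (ComonObj.comul (X := E.X) ≫ (cokernel.π (wedgePowι δ 0) ⊗ₘ cokernel.π (wedgePowι δ 0)))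
        rw [← Category.assoc] at h1
        exact zero_of_comp_mono _ h1
      have hι : kernel.ι (ComonObj.comul (X := E.X) ≫ (cokernel.π (wedgePowι δ 0) ⊗ₘ cokernel.π (wedgePowι δ 0)))
          = 0 := by
        have h3 : kernel.ι (ComonObj.comul (X := E.X) ≫ (cokernel.π (wedgePowι δ 0) ⊗ₘ cokernel.π (wedgePowι δ 0)))
            ≫ ComonObj.comul (X := E.X) ≫ (ComonObj.counit (X := E.X) ▷ E.X) ≫ (λ_ E.X).hom = kernel.ι _ := by
          rw [ComonObj.counit_comul_assoc, Iso.inv_hom_id, Category.comp_id]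
        rw [← h3, ← Category.assoc, h2, zero_comp]
      have hz : IsZero (kernel (ComonObj.comul (X := E.X) ≫
          (cokernel.π (wedgePowι δ 0) ⊗ₘ cokernel.π (wedgePowι δ 0)))) :=
        IsZero.of_mono_eq_zero _ hι
      refine ⟨hz.isoZero, ?_⟩
      rw [hι]
      exact comp_zero
    · -- `m = 0`
      haveI := isIso_π0 δ
      rw [Nat.zero_add]
      have hq1 : kernel.ι (cokernel.π (wedgePowι δ (b + 1))) ≫ Ue δ b = 0 :=
        kernel_cokernel_killed (Ue δ b)
      have hq2 : kernel.ι (Ue δ b) ≫ cokernel.π (wedgePowι δ (b + 1)) = 0 :=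
        cokernel.condition (wedgePowι δ (b + 1))
      have key : ∀ {T : M} (h : T ⟶ E.X),
          h ≫ (ComonObj.comul (X := E.X) ≫ (cokernel.π (wedgePowι δ 0) ⊗ₘ cokernel.π (wedgePowι δ (b + 1)))) = 0 ↔
          h ≫ Ue δ b = 0 := by
        intro T h
        haveI : IsIso ((cokernel.π (wedgePowι δ 0)) ▷ (cokernel (wedgePowι δ (b + 1)))) := by
          rw [← tensorRight_map]
          infer_instance
        rw [tensorHom_def']
        constructor
        · intro hh
          have h3 : ((h ≫ ComonObj.comul (X := E.X)) ≫ (E.X ◁ cokernel.π (wedgePowι δ (b + 1)))) ≫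
              (cokernel.π (wedgePowι δ 0) ▷ cokernel (wedgePowι δ (b + 1))) = 0 := by
            simpa only [Category.assoc] using hh
          have h4 := zero_of_comp_mono _ h3
          have h5 : (h ≫ ComonObj.comul (X := E.X)) ≫ (E.X ◁ Ue δ b) = 0 :=
            whiskerLeft_killed _ _ hq1 _ h4
          exact counit_cancel_left (Ue δ b) h h5
        · intro hh
          obtain ⟨w, hw⟩ := comulL δ b
          have h5 : (h ≫ ComonObj.comul (X := E.X)) ≫ (E.X ◁ Ue δ b) = 0 := by
            rw [Category.assoc, hw, ← Category.assoc, hh, zero_comp]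
          have h6 : (h ≫ ComonObj.comul (X := E.X)) ≫ (E.X ◁ cokernel.π (wedgePowι δ (b + 1))) = 0 :=
            whiskerLeft_killed _ _ hq2 _ h5
          rw [← Category.assoc, ← Category.assoc, h6, zero_comp]
      exact kernelIsoOfIff key
  · obtain _ | b := n
    · -- `n = 0`
      haveI := isIso_π0 δ
      have hq1 : kernel.ι (cokernel.π (wedgePowι δ (a + 1))) ≫ Ue δ a = 0 :=
        kernel_cokernel_killed (Ue δ a)
      have hq2 : kernel.ι (Ue δ a) ≫ cokernel.π (wedgePowι δ (a + 1)) = 0 :=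
        cokernel.condition (wedgePowι δ (a + 1))
      have key : ∀ {T : M} (h : T ⟶ E.X),
          h ≫ (ComonObj.comul (X := E.X) ≫ (cokernel.π (wedgePowι δ (a + 1)) ⊗ₘ cokernel.π (wedgePowι δ 0))) = 0 ↔
          h ≫ Ue δ a = 0 := by
        intro T h
        haveI : IsIso ((cokernel (wedgePowι δ (a + 1))) ◁ (cokernel.π (wedgePowι δ 0))) := by
          rw [← tensorLeft_map]
          infer_instance
        rw [MonoidalCategory.tensorHom_def]
        constructor
        · intro hh
          have h3 : ((h ≫ ComonObj.comul (X := E.X)) ≫ (cokernel.π (wedgePowι δ (a + 1)) ▷ E.X)) ≫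
              (cokernel (wedgePowι δ (a + 1)) ◁ cokernel.π (wedgePowι δ 0)) = 0 := by
            simpa only [Category.assoc] using hh
          have h4 := zero_of_comp_mono _ h3
          have h5 : (h ≫ ComonObj.comul (X := E.X)) ≫ (Ue δ a ▷ E.X) = 0 :=
            whiskerRight_killed _ _ hq1 _ h4
          exact counit_cancel_right (Ue δ a) h h5
        · intro hh
          obtain ⟨w, hw⟩ := comulR δ a
          have h5 : (h ≫ ComonObj.comul (X := E.X)) ≫ (Ue δ a ▷ E.X) = 0 := by
            rw [Category.assoc, hw, ← Category.assoc, hh, zero_comp]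
          have h6 : (h ≫ ComonObj.comul (X := E.X)) ≫ (cokernel.π (wedgePowι δ (a + 1)) ▷ E.X) = 0 :=
            whiskerRight_killed _ _ hq2 _ h5
          rw [← Category.assoc, ← Category.assoc, h6, zero_comp]
      exact kernelIsoOfIff key
    · -- the main case `m = a + 1`, `n = b + 1`
      obtain ⟨μ, hμ⟩ := comulM δ a b
      have key : ∀ {T : M} (h : T ⟶ E.X),
          h ≫ (ComonObj.comul (X := E.X) ≫
            (cokernel.π (wedgePowι δ (a + 1)) ⊗ₘ cokernel.π (wedgePowι δ (b + 1)))) = 0 ↔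
          h ≫ Ue δ (a + b + 1) = 0 := by
        intro T h
        have step1 : h ≫ (ComonObj.comul (X := E.X) ≫
            (cokernel.π (wedgePowι δ (a + 1)) ⊗ₘ cokernel.π (wedgePowι δ (b + 1)))) = 0 ↔
            (h ≫ ComonObj.comul (X := E.X)) ≫ (Ue δ a ⊗ₘ Ue δ b) = 0 := by
          rw [← Category.assoc]
          exact tensor_killed_iff _ _ _ _ (kernel_cokernel_killed (Ue δ a))
            (cokernel.condition (wedgePowι δ (a + 1))) (kernel_cokernel_killed (Ue δ b))
            (cokernel.condition (wedgePowι δ (b + 1))) _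
        rw [step1, Category.assoc, ← hμ, ← Category.assoc]
        constructor
        · intro hh
          exact zero_of_comp_mono _ hh
        · intro hh
          rw [hh, zero_comp]
      rw [show a + 1 + (b + 1) = a + b + 1 + 1 by omega]
      exact kernelIsoOfIff key
end

section
/- Let D and E be coalgebras in a coabelian monoidal category M and let δ : D → E be a monomorphism which is a morphism of coalgebras; write D^n := D^{∧_E^n}. Then, for every n ∈ ℕ, there exists a unique morphism τ_n : D^{n+1} → (D^n/D) ⊗ (D^n/D) such that ((ξ_n^{n+1}/D) ⊗ (ξ_n^{n+1}/D)) ∘ τ_n = α_D^{D^{n+1}}, where ξ_n^{n+1}/D : D^n/D → D^{n+1}/D is the morphism induced on quotients by the canonical inclusion ξ_n^{n+1} : D^n → D^{n+1}. -/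
open CategoryTheory CategoryTheory.Limits MonoidalCategory ZeroObject

universe v u

variable {M : Type u} [Category.{v} M] [MonoidalCategory M] [Abelian M]

variable {D E : Comon M} (δ : D ⟶ E)

instance wedgePowι_mono (n : ℕ) : Mono (wedgePowι δ (n + 1)) := by
  show Mono (kernel.ι _); infer_instance


set_option linter.unusedSectionVars false

section Helpers

variable {C : Type u} [Category.{v} C] [Abelian C]

lemma mono_of_factor {P Q X Y : C} (k : P ⟶ X) (e : X ⟶ Q) [Epi e] (hke : k ≫ e = 0)
    (v : Q ⟶ Y) (f : X ⟶ Y) (hef : e ≫ v = f)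
    (hk : ∀ {T : C} (w : T ⟶ X), w ≫ f = 0 → ∃ u : T ⟶ P, u ≫ k = w) : Mono v := by
  apply Preadditive.mono_of_cancel_zero
  intro T w hw
  have hcond := pullback.condition (f := w) (g := e)
  obtain ⟨u, hu⟩ := hk (pullback.snd w e) (by
    rw [← hef, ← Category.assoc, ← hcond, Category.assoc, hw, comp_zero])
  have hz : pullback.fst w e ≫ w = 0 := by
    rw [hcond, ← hu, Category.assoc, hke, comp_zero]
  exact zero_of_epi_comp (pullback.fst w e) hz

lemma lift_map_kernel (F : C ⥤ C) [F.Additive] [PreservesFiniteLimits F]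
    {X Y : C} (m : X ⟶ Y) [Mono m] {T : C} (h : T ⟶ F.obj Y)
    (hh : h ≫ F.map (cokernel.π m) = 0) : ∃ u : T ⟶ F.obj X, u ≫ F.map m = h := by
  have l0 : IsLimit (KernelFork.ofι m (cokernel.condition m)) :=
    Abelian.monoIsKernelOfCokernel (CokernelCofork.ofπ _ (cokernel.condition m)) (cokernelIsCokernel m)
  have l := isLimitForkMapOfIsLimit' F (cokernel.condition m) l0
  obtain ⟨u, hu⟩ := KernelFork.IsLimit.lift' l h hh
  exact ⟨u, hu⟩

lemma map_mono' (F : C ⥤ C) [PreservesFiniteLimits F] {X Y : C} (m : X ⟶ Y) [Mono m] :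
    Mono (F.map m) :=
  F.map_mono m

end Helpers

set_option linter.unusedSectionVars false

section HelpersM

variable {C : Type u} [Category.{v} C] [MonoidalCategory C] [Abelian C]
variable [∀ X : C, (tensorLeft X).Additive] [∀ X : C, (tensorRight X).Additive]
variable [∀ X : C, PreservesFiniteLimits (tensorLeft X)]
variable [∀ X : C, PreservesFiniteLimits (tensorRight X)]

lemma whiskerRight_mono' {X Y : C} (m : X ⟶ Y) [Mono m] (Z : C) : Mono (m ▷ Z) := by
  have := map_mono' (tensorRight Z) m
  simpa using this

lemma whiskerLeft_mono' {X Y : C} (m : X ⟶ Y) [Mono m] (Z : C) : Mono (Z ◁ m) := by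
  have := map_mono' (tensorLeft Z) m
  simpa using this

lemma tensor_mono' {X X' Y Y' : C} (f : X ⟶ Y) (g : X' ⟶ Y') [Mono f] [Mono g] :
    Mono (f ⊗ₘ g) := by
  rw [MonoidalCategory.tensorHom_def]
  have h1 : Mono (f ▷ X') := whiskerRight_mono' f X'
  have h2 : Mono (Y ◁ g) := whiskerLeft_mono' g Y
  exact mono_comp _ _

end HelpersM

section TensorPowers

lemma tpowHom_two {X Y : M} (f : X ⟶ Y) (k : ℕ) :
    tpowHom f (k + 2) = tpowHom f (k + 1) ⊗ₘ f := rfl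

lemma iterComul_succ' (E : Comon M) (k : ℕ) :
    iterComul E (k + 1) = (ComonObj.comul (X := E.X)) ≫ (iterComul E k ⊗ₘ 𝟙 E.X) := rfl

lemma iterComul_tpowHom_succ (E : Comon M) {L : M} (f : E.X ⟶ L) (k : ℕ) :
    iterComul E (k + 1) ≫ tpowHom f (k + 2) =
      (ComonObj.comul (X := E.X)) ≫ ((iterComul E k ≫ tpowHom f (k + 1)) ⊗ₘ f) := by
  rw [iterComul_succ', tpowHom_two]
  show (ComonObj.comul (X := E.X) ≫ (iterComul E k ⊗ₘ 𝟙 E.X)) ≫ (tpowHom f (k + 1) ⊗ₘ f) = _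
  rw [Category.assoc, tensorHom_comp_tensorHom, Category.id_comp]

/-- The canonical associativity isomorphism `X ⊗ₘ X^{⊗k} ≅ X^{⊗(k+1)}`. -/
noncomputable def sig (X : M) : (k : ℕ) → (X ⊗ tpow X k ≅ tpow X (k + 1))
  | 0 => ρ_ X
  | 1 => Iso.refl (X ⊗ X)
  | (k + 2) => (α_ X (tpow X (k + 1)) X).symm ≪≫ whiskerRightIso (sig X (k + 1)) X

lemma sig_two (X : M) (k : ℕ) :
    (sig X (k + 2)).hom = (α_ X (tpow X (k + 1)) X).inv ≫ ((sig X (k + 1)).hom ▷ X) := rfl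

lemma sig_natural {X Y : M} (f : X ⟶ Y) : ∀ (k : ℕ),
    (f ⊗ₘ tpowHom f k) ≫ (sig Y k).hom = (sig X k).hom ≫ tpowHom f (k + 1)
  | 0 => by
    show (f ⊗ₘ 𝟙 (𝟙_ M)) ≫ (ρ_ Y).hom = (ρ_ X).hom ≫ f
    simp [tensorHom_id]
  | 1 => by
    show (f ⊗ₘ f) ≫ 𝟙 _ = 𝟙 _ ≫ (f ⊗ₘ f)
    simp
  | (k + 2) => by
    rw [sig_two, sig_two, tpowHom_two,
      show tpowHom f (k + 2 + 1) = tpowHom f (k + 2) ⊗ₘ f from rfl]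
    show (f ⊗ₘ (tpowHom f (k + 1) ⊗ₘ f)) ≫ (α_ Y (tpow Y (k + 1)) Y).inv ≫
        ((sig Y (k + 1)).hom ▷ Y) =
      ((α_ X (tpow X (k + 1)) X).inv ≫ ((sig X (k + 1)).hom ▷ X)) ≫ (tpowHom f (k + 2) ⊗ₘ f)
    rw [← Category.assoc, associator_inv_naturality, Category.assoc, Category.assoc]
    congr 1
    rw [← tensorHom_id, ← tensorHom_id, tensorHom_comp_tensorHom, tensorHom_comp_tensorHom, sig_natural f (k + 1),
      Category.comp_id, Category.id_comp]

lemma iterComul_coassoc (E : Comon M) : ∀ (k : ℕ),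
    iterComul E (k + 1) = (ComonObj.comul (X := E.X)) ≫ (E.X ◁ iterComul E k) ≫ (sig E.X (k + 1)).hom
  | 0 => by
    show (ComonObj.comul (X := E.X)) ≫ (𝟙 E.X ⊗ₘ 𝟙 E.X) = (ComonObj.comul (X := E.X)) ≫ (E.X ◁ 𝟙 E.X) ≫ 𝟙 _
    simp
  | (k + 1) => by
    have hca : (ComonObj.comul (X := E.X)) ≫ ((ComonObj.comul (X := E.X)) ▷ E.X) =
        (ComonObj.comul (X := E.X)) ≫ (E.X ◁ (ComonObj.comul (X := E.X))) ≫ (α_ E.X E.X E.X).inv := by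
      rw [ComonObj.comul_assoc_assoc]; simp
    conv_lhs => rw [iterComul_succ' E (k + 1), iterComul_coassoc E k]
    rw [show (sig E.X (k + 1 + 1)).hom
        = (α_ E.X (tpow E.X (k + 1)) E.X).inv ≫ ((sig E.X (k + 1)).hom ▷ E.X) from rfl]
    conv_rhs => rw [iterComul_succ' E k]
    simp only [tensorHom_id, comp_whiskerRight, MonoidalCategory.whiskerLeft_comp]
    rw [reassoc_of% hca]
    show ComonObj.comul (X := E.X) ≫ E.X ◁ ComonObj.comul (X := E.X) ≫ (α_ E.X E.X E.X).inv ≫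
        (E.X ◁ iterComul E k) ▷ E.X ≫ (sig E.X (k + 1)).hom ▷ E.X =
      ComonObj.comul (X := E.X) ≫ E.X ◁ (ComonObj.comul (X := E.X) ≫ iterComul E k ▷ E.X) ≫
        (α_ E.X (tpow E.X (k + 1)) E.X).inv ≫ (sig E.X (k + 1)).hom ▷ E.X
    simp only [MonoidalCategory.whiskerLeft_comp, Category.assoc, associator_inv_naturality_middle_assoc,
      associator_inv_naturality_middle]

lemma comul_tensor_decomp (E : Comon M) {L : M} (f : E.X ⟶ L) (k : ℕ) :
    (ComonObj.comul (X := E.X)) ≫ (f ⊗ₘ (iterComul E k ≫ tpowHom f (k + 1))) ≫ (sig L (k + 1)).hom =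
      iterComul E (k + 1) ≫ tpowHom f (k + 2) := by
  have h1 : (f ⊗ₘ (iterComul E k ≫ tpowHom f (k + 1)))
      = (E.X ◁ iterComul E k) ≫ (f ⊗ₘ tpowHom f (k + 1)) := by
    rw [← id_tensorHom, tensorHom_comp_tensorHom, Category.id_comp]
  rw [h1, Category.assoc, sig_natural f (k + 1), iterComul_coassoc E k]
  simp only [Category.assoc]

end TensorPowers

section TauCore

variable {C : Type u} [Category.{v} C] [MonoidalCategory C] [Abelian C]
variable [∀ X : C, (tensorLeft X).Additive] [∀ X : C, (tensorRight X).Additive]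
variable [∀ X : C, PreservesFiniteLimits (tensorLeft X)]
variable [∀ X : C, PreservesFiniteLimits (tensorRight X)]

theorem tau_core {DX Eo N0 N1 A B : C}
    (δh : DX ⟶ Eo) (p : Eo ⟶ B)
    (hker_p : ∀ {T : C} (w : T ⟶ Eo), w ≫ p = 0 → ∃ u : T ⟶ DX, u ≫ δh = w)
    (hδp : δh ≫ p = 0)
    (g' : Eo ⟶ A)
    (ι0 : N0 ⟶ Eo) [Mono ι0] (hι0g : ι0 ≫ g' = 0)
    (hker_g : ∀ {T : C} (w : T ⟶ Eo), w ≫ g' = 0 → ∃ u : T ⟶ N0, u ≫ ι0 = w)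
    (ι1 : N1 ⟶ Eo) [Mono ι1]
    (ΔE : Eo ⟶ Eo ⊗ Eo)
    (hA : ι1 ≫ ΔE ≫ (g' ⊗ₘ p) = 0)
    (hB : ι1 ≫ ΔE ≫ (p ⊗ₘ g') = 0)
    (ξ : N0 ⟶ N1) (hξ : ξ ≫ ι1 = ι0)
    (j1 : DX ⟶ N0) (hj1 : j1 ≫ ι0 = δh) [Mono j1]
    (jD : DX ⟶ N1) (hjD : jD ≫ ι1 = δh) [Mono jD]
    (comulN : N1 ⟶ N1 ⊗ N1) (hcomulN : comulN ≫ (ι1 ⊗ₘ ι1) = ι1 ≫ ΔE)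
    (hcomm : j1 ≫ ξ = 𝟙 DX ≫ jD) :
    ∃! τ : N1 ⟶ cokernel j1 ⊗ cokernel j1,
      τ ≫ (cokernel.map j1 jD (𝟙 DX) ξ hcomm ⊗ₘ cokernel.map j1 jD (𝟙 DX) ξ hcomm) =
        comulN ≫ (cokernel.π jD ⊗ₘ cokernel.π jD) := by
  have hjξ : j1 ≫ ξ = jD := by rw [hcomm, Category.id_comp]
  have hmξ : Mono ξ := by
    have : Mono (ξ ≫ ι1) := by rw [hξ]; infer_instance
    exact mono_of_mono ξ ι1
  set ξb : cokernel j1 ⟶ cokernel jD := cokernel.map j1 jD (𝟙 DX) ξ hcomm with hξbdef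
  have hπξb : cokernel.π j1 ≫ ξb = ξ ≫ cokernel.π jD := by
    simp [hξbdef]
  -- ξb is a monomorphism
  have hmξb : Mono ξb := by
    refine mono_of_factor j1 (cokernel.π j1) (cokernel.condition j1) ξb
      (ξ ≫ cokernel.π jD) hπξb ?_
    intro T w hw
    obtain ⟨u, hu⟩ : ∃ u : T ⟶ DX, u ≫ jD = w ≫ ξ := by
      refine ⟨Abelian.monoLift jD (w ≫ ξ) ?_, Abelian.monoLift_comp _ _ _⟩
      rw [Category.assoc]; exact hw
    refine ⟨u, ?_⟩
    rw [← cancel_mono ξ, Category.assoc, hjξ, hu]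
  -- the (mono) morphism `cokernel jD ⟶ B` induced by `ι1 ≫ p`
  have hjDp : jD ≫ ι1 ≫ p = 0 := by rw [← Category.assoc, hjD, hδp]
  set vD : cokernel jD ⟶ B := cokernel.desc jD (ι1 ≫ p) hjDp with hvDdef
  have hvD : cokernel.π jD ≫ vD = ι1 ≫ p := cokernel.π_desc _ _ _
  have hmvD : Mono vD := by
    refine mono_of_factor jD (cokernel.π jD) (cokernel.condition jD) vD (ι1 ≫ p) hvD ?_
    intro T w hw
    obtain ⟨u, hu⟩ := hker_p (w ≫ ι1) (by rw [Category.assoc]; exact hw)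
    refine ⟨u, ?_⟩
    rw [← cancel_mono ι1, Category.assoc, hjD, hu]
  -- the (mono) morphism `cokernel ξ ⟶ A` induced by `ι1 ≫ g'`
  have hξg : ξ ≫ ι1 ≫ g' = 0 := by rw [← Category.assoc, hξ, hι0g]
  set vξ : cokernel ξ ⟶ A := cokernel.desc ξ (ι1 ≫ g') hξg with hvξdef
  have hvξ : cokernel.π ξ ≫ vξ = ι1 ≫ g' := cokernel.π_desc _ _ _
  have hmvξ : Mono vξ := by
    refine mono_of_factor ξ (cokernel.π ξ) (cokernel.condition ξ) vξ (ι1 ≫ g') hvξ ?_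
    intro T w hw
    obtain ⟨u, hu⟩ := hker_g (w ≫ ι1) (by rw [Category.assoc]; exact hw)
    refine ⟨u, ?_⟩
    rw [← cancel_mono ι1, Category.assoc, hξ, hu]
  -- Claim A
  have claimA : comulN ≫ (cokernel.π ξ ⊗ₘ cokernel.π jD) = 0 := by
    have hm : Mono (vξ ⊗ₘ vD) := tensor_mono' vξ vD
    rw [← cancel_mono (vξ ⊗ₘ vD), zero_comp, Category.assoc, tensorHom_comp_tensorHom, hvξ, hvD,
      show (ι1 ≫ g') ⊗ₘ (ι1 ≫ p) = (ι1 ⊗ₘ ι1) ≫ (g' ⊗ₘ p) from by rw [tensorHom_comp_tensorHom],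
      ← Category.assoc, hcomulN, Category.assoc, hA]
  -- Claim B
  have claimB : comulN ≫ (cokernel.π jD ⊗ₘ cokernel.π ξ) = 0 := by
    have hm : Mono (vD ⊗ₘ vξ) := tensor_mono' vD vξ
    rw [← cancel_mono (vD ⊗ₘ vξ), zero_comp, Category.assoc, tensorHom_comp_tensorHom, hvξ, hvD,
      show (ι1 ≫ p) ⊗ₘ (ι1 ≫ g') = (ι1 ⊗ₘ ι1) ≫ (p ⊗ₘ g') from by rw [tensorHom_comp_tensorHom],
      ← Category.assoc, hcomulN, Category.assoc, hB]
  -- the comparison morphism on cokernels of ξ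
  have hξc : ξ ≫ cokernel.π jD ≫ cokernel.π ξb = 0 := by
    rw [← Category.assoc, ← hπξb, Category.assoc, cokernel.condition, comp_zero]
  set eξ : cokernel ξ ⟶ cokernel ξb := cokernel.desc ξ (cokernel.π jD ≫ cokernel.π ξb) hξc
    with heξdef
  have heξ : cokernel.π ξ ≫ eξ = cokernel.π jD ≫ cokernel.π ξb := cokernel.π_desc _ _ _
  -- Step 1 : lift through ξb ▷ cokernel jD
  have hstep1 : (comulN ≫ (cokernel.π jD ⊗ₘ cokernel.π jD)) ≫
      (tensorRight (cokernel jD)).map (cokernel.π ξb) = 0 := by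
    simp only [Functor.flip_obj_obj, Functor.flip_obj_map, curriedTensor_obj_obj, curriedTensor_obj_map, curriedTensor_map_app]
    rw [Category.assoc, ← tensorHom_id, tensorHom_comp_tensorHom, heξ.symm, Category.comp_id,
      show (cokernel.π ξ ≫ eξ) ⊗ₘ cokernel.π jD
        = (cokernel.π ξ ⊗ₘ cokernel.π jD) ≫ (eξ ⊗ₘ 𝟙 _) from by
          rw [tensorHom_comp_tensorHom, Category.comp_id],
      ← Category.assoc, claimA, zero_comp]
  obtain ⟨τ₁, hτ₁⟩ := lift_map_kernel (tensorRight (cokernel jD)) ξb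
    (comulN ≫ (cokernel.π jD ⊗ₘ cokernel.π jD)) hstep1
  simp only [Functor.flip_obj_obj, Functor.flip_obj_map, curriedTensor_obj_obj, curriedTensor_obj_map, curriedTensor_map_app] at hτ₁
  -- Step 2 : lift through cokernel j1 ◁ ξb
  have hstep2 : τ₁ ≫ (tensorLeft (cokernel j1)).map (cokernel.π ξb) = 0 := by
    simp only [Functor.flip_obj_obj, Functor.flip_obj_map, curriedTensor_obj_obj, curriedTensor_obj_map, curriedTensor_map_app]
    have hm : Mono (ξb ▷ cokernel ξb) := whiskerRight_mono' ξb _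
    rw [← cancel_mono (ξb ▷ cokernel ξb), zero_comp, Category.assoc, whisker_exchange,
      ← Category.assoc, hτ₁, Category.assoc, ← id_tensorHom, tensorHom_comp_tensorHom, heξ.symm,
      ← tensorHom_comp_tensorHom, ← Category.assoc, claimB, zero_comp]
  obtain ⟨τ, hτ⟩ := lift_map_kernel (tensorLeft (cokernel j1)) ξb τ₁ hstep2
  simp only [Functor.flip_obj_obj, Functor.flip_obj_map, curriedTensor_obj_obj, curriedTensor_obj_map, curriedTensor_map_app] at hτ
  refine ⟨τ, ?_, ?_⟩
  · show τ ≫ (ξb ⊗ₘ ξb) = comulN ≫ (cokernel.π jD ⊗ₘ cokernel.π jD)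
    rw [tensorHom_def' ξb ξb, ← Category.assoc, hτ, hτ₁]
  · intro y hy
    have hm : Mono (ξb ⊗ₘ ξb) := tensor_mono' ξb ξb
    have hy' : y ≫ (ξb ⊗ₘ ξb) = comulN ≫ (cokernel.π jD ⊗ₘ cokernel.π jD) := hy
    rw [← cancel_mono (ξb ⊗ₘ ξb), hy', tensorHom_def' ξb ξb, ← Category.assoc, hτ, hτ₁]

end TauCore

/-- Let `δ : D ⟶ E` be a monomorphism of coalgebras in a coabelian monoidal
category `M` and write `D^n := D^{∧_E^n}`.  For every `n ∈ ℕ` there is a unique morphism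
`τ_n : D^{n+1} ⟶ (D^n/D) ⊗ₘ (D^n/D)` with `((ξ_n^{n+1}/D) ⊗ₘ (ξ_n^{n+1}/D)) ∘ τ_n = α_D^{D^{n+1}}`.
Here `ξ_n^{n+1} : D^n ⟶ D^{n+1}` and the inclusions `ξ_1^n : D ⟶ D^n`, `ξ_1^{n+1} : D ⟶ D^{n+1}`
are the canonical morphisms (characterised by compatibility with the `δ_k`), the quotients
`D^n/D`, `D^{n+1}/D` are the corresponding cokernels, `ξ_n^{n+1}/D` is the induced morphism on
quotients, and `α_D^{D^{n+1}} = (p_D ⊗ₘ p_D) ∘ Δ_{D^{n+1}}` where the comultiplication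
`Δ_{D^{n+1}}` is the (unique) one making `δ_{n+1}` a coalgebra homomorphism. -/
theorem tau_exists_unique
    {M : Type u} [Category.{v} M] [MonoidalCategory M] [Abelian M]
    [∀ X : M, (tensorLeft X).Additive] [∀ X : M, (tensorRight X).Additive]
    [∀ X : M, PreservesFiniteLimits (tensorLeft X)]
    [∀ X : M, PreservesFiniteLimits (tensorRight X)]
    {D E : Comon M} (δ : D ⟶ E) [Mono δ.hom] (n : ℕ)
    -- `ξ = ξ_n^{n+1} : D^n ⟶ D^{n+1}`
    (ξ : wedgePow δ n ⟶ wedgePow δ (n + 1))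
    (hξ : ξ ≫ wedgePowι δ (n + 1) = wedgePowι δ n)
    -- `j1 = ξ_1^n : D ⟶ D^n`, realising `D` as a subobject of `D^n`
    (j1 : D.X ⟶ wedgePow δ n) (hj1 : j1 ≫ wedgePowι δ n = δ.hom) [Mono j1]
    -- `jD = ξ_1^{n+1} : D ⟶ D^{n+1}`, realising `D` as a subobject of `D^{n+1}`
    (jD : D.X ⟶ wedgePow δ (n + 1)) (hjD : jD ≫ wedgePowι δ (n + 1) = δ.hom) [Mono jD]
    -- the coalgebra structure of `D^{n+1}`
    (comulN : wedgePow δ (n + 1) ⟶ wedgePow δ (n + 1) ⊗ wedgePow δ (n + 1))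
    (hcomulN : comulN ≫ (wedgePowι δ (n + 1) ⊗ₘ wedgePowι δ (n + 1)) =
      wedgePowι δ (n + 1) ≫ ComonObj.comul (X := E.X)) :
    ∃! τ : wedgePow δ (n + 1) ⟶ cokernel j1 ⊗ cokernel j1,
      τ ≫ (cokernel.map j1 jD (𝟙 D.X) ξ
            (by rw [← cancel_mono (wedgePowι δ (n + 1))]
                simp [Category.assoc, hξ, hj1, hjD]) ⊗ₘ
          cokernel.map j1 jD (𝟙 D.X) ξ
            (by rw [← cancel_mono (wedgePowι δ (n + 1))]
                simp [Category.assoc, hξ, hj1, hjD])) =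
        comulN ≫ (cokernel.π jD ⊗ₘ cokernel.π jD) := by
  cases n with
  | zero =>
    -- Degenerate case: `D^{∧1}` is a zero object.
    have hδ0 : δ.hom = 0 := by
      rw [← hj1, show wedgePowι δ 0 = 0 from rfl, comp_zero]
    have hmp : Mono (cokernel.π δ.hom) := by
      have hcomp : cokernel.π δ.hom ≫ cokernel.desc δ.hom (𝟙 E.X) (by simp [hδ0]) = 𝟙 E.X :=
        cokernel.π_desc _ _ _
      exact mono_of_mono_fac hcomp
    have hz : IsZero (wedgePow δ (0 + 1)) := by
      have hι : wedgePowι δ (0 + 1) ≫ (𝟙 E.X ≫ cokernel.π δ.hom) = 0 := kernel.condition _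
      rw [Category.id_comp] at hι
      have hι0 : wedgePowι δ (0 + 1) = 0 := zero_of_comp_mono _ hι
      haveI := wedgePowι_mono δ 0
      refine (IsZero.iff_id_eq_zero _).2 ?_
      rw [← cancel_mono (wedgePowι δ (0 + 1)), hι0, comp_zero, zero_comp]
    refine ⟨0, ?_, ?_⟩
    · have hc : comulN = 0 := hz.eq_of_src comulN 0
      show (0 : wedgePow δ (0 + 1) ⟶ _) ≫ _ = comulN ≫ _
      rw [hc, zero_comp, zero_comp]
    · intro y _
      exact hz.eq_of_src y 0
  | succ m =>
    have hker_p : ∀ {T : M} (w : T ⟶ E.X), w ≫ cokernel.π δ.hom = 0 →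
        ∃ u : T ⟶ D.X, u ≫ δ.hom = w := fun w hw =>
      ⟨Abelian.monoLift δ.hom w hw, Abelian.monoLift_comp _ _ _⟩
    have hδp : δ.hom ≫ cokernel.π δ.hom = 0 := cokernel.condition _
    have hι0g : wedgePowι δ (m + 1) ≫
        (iterComul E m ≫ tpowHom (cokernel.π δ.hom) (m + 1)) = 0 := kernel.condition _
    have hker_g : ∀ {T : M} (w : T ⟶ E.X),
        w ≫ (iterComul E m ≫ tpowHom (cokernel.π δ.hom) (m + 1)) = 0 →
        ∃ u : T ⟶ wedgePow δ (m + 1), u ≫ wedgePowι δ (m + 1) = w := fun w hw =>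
      ⟨kernel.lift _ w hw, kernel.lift_ι _ _ _⟩
    have hA : wedgePowι δ (m + 1 + 1) ≫ (ComonObj.comul (X := E.X)) ≫
        ((iterComul E m ≫ tpowHom (cokernel.π δ.hom) (m + 1)) ⊗ₘ cokernel.π δ.hom) = 0 := by
      have h2 : wedgePowι δ (m + 1 + 1) ≫
          iterComul E (m + 1) ≫ tpowHom (cokernel.π δ.hom) (m + 2) = 0 := kernel.condition _
      rw [iterComul_tpowHom_succ E (cokernel.π δ.hom) m] at h2
      exact h2
    have hB : wedgePowι δ (m + 1 + 1) ≫ (ComonObj.comul (X := E.X)) ≫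
        (cokernel.π δ.hom ⊗ₘ (iterComul E m ≫ tpowHom (cokernel.π δ.hom) (m + 1))) = 0 := by
      have h2 : wedgePowι δ (m + 1 + 1) ≫
          iterComul E (m + 1) ≫ tpowHom (cokernel.π δ.hom) (m + 2) = 0 := kernel.condition _
      rw [← comul_tensor_decomp E (cokernel.π δ.hom) m] at h2
      rw [← cancel_mono ((sig (cokernel δ.hom) (m + 1)).hom), zero_comp]
      simpa only [Category.assoc] using h2
    haveI := wedgePowι_mono δ m
    haveI := wedgePowι_mono δ (m + 1)
    exact tau_core δ.hom (cokernel.π δ.hom) hker_p hδp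
      (iterComul E m ≫ tpowHom (cokernel.π δ.hom) (m + 1))
      (wedgePowι δ (m + 1)) hι0g hker_g
      (wedgePowι δ (m + 1 + 1)) (ComonObj.comul (X := E.X)) hA hB ξ hξ j1 hj1 jD hjD comulN hcomulN
      (by rw [Category.id_comp, ← cancel_mono (wedgePowι δ (m + 1 + 1)), Category.assoc, hξ,
        hj1, hjD])
end
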